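/- arXiv:2106.14486 — 9 statements merged into one kernel-verified Lean document; each statement's English description precedes it below -/
import Mathlib

section
/- Let u_k : ℝ_+^m → ℝ (k = 1,…,K) be monotone, continuous, locally non-satiated utility functions and β_k ∈ ℝ_+^m consumption bundles. Suppose there exists a monotone, continuous, locally non-satiated function g : ℝ_+^m → ℝ and positive scalars γ_1,…,γ_K such that for every k, β_k maximizes u_k(β) over {β : g(β) ≤ γ_k} and g(β_k) = γ_k. Then the dataset satisfies GARP with constraint functions g_k(β) = u_k(β_k) − u_k(β): that is, whenever there exist indices i_1,…,i_L with u_k(β_{i_1}) ≥ u_k(β_k), u_{i_1}(β_{i_2}) ≥ u_{i_1}(β_{i_1}), …, u_{i_L}(β_j) ≥ u_{i_L}(β_{i_L}), it follows that u_j(β_k) ≤ u_j(β_j). -/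
/-- The nonnegative orthant `ℝ_+^m`. -/
def Rplus (m : ℕ) : Set (Fin m → ℝ) := {x | ∀ i, 0 ≤ x i}

/-- Monotone on `ℝ_+^m` with respect to the componentwise order. -/
def MonoOnRplus (m : ℕ) (f : (Fin m → ℝ) → ℝ) : Prop :=
  ∀ x ∈ Rplus m, ∀ y ∈ Rplus m, x ≤ y → f x ≤ f y

/-- Locally non-satiated on `ℝ_+^m`. -/
def LNS (m : ℕ) (f : (Fin m → ℝ) → ℝ) : Prop :=
  ∀ x ∈ Rplus m, ∀ ε > (0 : ℝ), ∃ x' ∈ Rplus m, ‖x' - x‖ < ε ∧ f x < f x'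

/-- If `g b < γ`, continuity of `g` keeps a strictly better nearby bundle affordable. -/
theorem LNS.le_of_le_of_maximizes {m : ℕ} {u g : (Fin m → ℝ) → ℝ} {γ : ℝ} {x b : Fin m → ℝ}
    (hu : LNS m u) (hg : ContinuousOn g (Rplus m))
    (hmax : ∀ y ∈ Rplus m, g y ≤ γ → u y ≤ u x) (hb : b ∈ Rplus m) (hub : u x ≤ u b) :
    γ ≤ g b := by
  by_contra! hlt
  obtain ⟨ε, hε, hball⟩ := Metric.mem_nhdsWithin_iff.1 (hg b hb (Iio_mem_nhds hlt))
  obtain ⟨b', hb', hdist, hbetter⟩ := hu b hb ε hε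
  have hafford : g b' < γ := hball ⟨by rwa [Metric.mem_ball, dist_eq_norm], hb'⟩
  linarith [hmax b' hb' hafford.le]

theorem stmt1_general (m K : ℕ) (u : Fin K → (Fin m → ℝ) → ℝ) (β : Fin K → (Fin m → ℝ))
    (hβ : ∀ k, β k ∈ Rplus m)
    (hlns : ∀ k, LNS m (u k))
    (g : (Fin m → ℝ) → ℝ) (γ : Fin K → ℝ)
    (hgcont : ContinuousOn g (Rplus m))
    (hbind : ∀ k, g (β k) = γ k)
    (hmax : ∀ k, ∀ b ∈ Rplus m, g b ≤ γ k → u k b ≤ u k (β k)) :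
    -- GARP with constraint functions `g_k(β) = u_k(β_k) − u_k(β)`:
    ∀ k j : Fin K, k ≠ j →
      (∃ (L : ℕ) (i : Fin (L + 1) → Fin K),
        u k (β k) ≤ u k (β (i 0)) ∧
        (∀ l : Fin L, u (i l.castSucc) (β (i l.castSucc)) ≤ u (i l.castSucc) (β (i l.succ))) ∧
        u (i (Fin.last L)) (β (i (Fin.last L))) ≤ u (i (Fin.last L)) (β j)) →
      u j (β k) ≤ u j (β j) := by
  have revealed : ∀ k l, u k (β k) ≤ u k (β l) → γ k ≤ γ l := fun k l h =>
    hbind l ▸ (hlns k).le_of_le_of_maximizes hgcont (hmax k) (hβ l) h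
  rintro k j - ⟨L, i, h0, hchain, hlast⟩
  have hmono : Monotone (γ ∘ i) :=
    Fin.monotone_iff_le_succ.2 fun l => revealed _ _ (hchain l)
  refine hmax j (β k) (hβ k) ?_
  calc g (β k) = γ k := hbind k
    _ ≤ γ (i 0) := revealed _ _ h0
    _ ≤ γ (i (Fin.last L)) := hmono (Fin.zero_le _)
    _ ≤ γ j := revealed _ _ hlast

theorem stmt1 (m K : ℕ) (u : Fin K → (Fin m → ℝ) → ℝ) (β : Fin K → (Fin m → ℝ))
    (hβ : ∀ k, β k ∈ Rplus m)
    (hmono : ∀ k, MonoOnRplus m (u k))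
    (hcont : ∀ k, ContinuousOn (u k) (Rplus m))
    (hlns : ∀ k, LNS m (u k))
    (g : (Fin m → ℝ) → ℝ) (γ : Fin K → ℝ)
    (hgmono : MonoOnRplus m g) (hgcont : ContinuousOn g (Rplus m)) (hglns : LNS m g)
    (hγpos : ∀ k, 0 < γ k)
    (hbind : ∀ k, g (β k) = γ k)
    (hmax : ∀ k, ∀ b ∈ Rplus m, g b ≤ γ k → u k b ≤ u k (β k)) :
    -- GARP with constraint functions `g_k(β) = u_k(β_k) − u_k(β)`:
    ∀ k j : Fin K, k ≠ j →
      (∃ (L : ℕ) (i : Fin (L + 1) → Fin K),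
        u k (β k) ≤ u k (β (i 0)) ∧
        (∀ l : Fin L, u (i l.castSucc) (β (i l.castSucc)) ≤ u (i l.castSucc) (β (i l.succ))) ∧
        u (i (Fin.last L)) (β (i (Fin.last L))) ≤ u (i (Fin.last L)) (β j)) →
      u j (β k) ≤ u j (β j) :=
  stmt1_general m K u β hβ hlns g γ hgcont hbind hmax
end

section
/- Let u_k : ℝ_+^m → ℝ (k = 1,…,K) be monotone, continuous, locally non-satiated utility functions and β_k ∈ ℝ_+^m consumption bundles. If the dataset satisfies GARP with constraint functions g_k(β) = u_k(β_k) − u_k(β), then there exist positive scalars ḡ_1,…,ḡ_K and λ_1,…,λ_K such that ḡ_s − ḡ_t − λ_t (u_t(β_s) − u_t(β_t)) ≥ 0 for all s, t ∈ {1,…,K}. -/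
/-!
GARP says that the weak revealed-preference relation `t → s :⇔ u_t(β_s) ≥ u_t(β_t)` has no
cycle through a strict step. Rank each `t` by the number of bundles from which it is revealed
preferred: this rank weakly increases along `→` and strictly along a strict step. Taking
`ḡ_t = C ^ rank t` and `λ_t = ḡ_t / δ`, where `δ` bounds the negative entries of
`A t s = u_t(β_s) - u_t(β_t)` away from zero and `C = 1 + max A / δ`, a negative entry is
absorbed by `λ_t`, a zero entry by monotonicity of the rank, and a positive entry by the
factor `C` gained in the rank.
-/

open Relation Finset

lemma exists_chain_of_transGen {α : Type*} {r : α → α → Prop} (hr : ∀ x, r x x) {a b : α}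
    (h : TransGen r a b) :
    ∃ (L : ℕ) (i : Fin (L + 1) → α),
      r a (i 0) ∧ (∀ l : Fin L, r (i l.castSucc) (i l.succ)) ∧ r (i (Fin.last L)) b := by
  induction h with
  | single hab => exact ⟨0, fun _ => a, hr a, fun l => l.elim0, hab⟩
  | @tail c d _ hcd ih =>
    obtain ⟨L, i, h_first, h_step, h_last⟩ := ih
    refine ⟨L + 1, Fin.snoc i c, ?_, fun l => ?_, ?_⟩
    · rwa [← Fin.castSucc_zero, Fin.snoc_castSucc]
    · induction l using Fin.lastCases with
      | last => rwa [Fin.snoc_castSucc, Fin.succ_last, Fin.snoc_last]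
      | cast l => rw [Fin.snoc_castSucc, Fin.succ_castSucc, Fin.snoc_castSucc]; exact h_step l
    · rwa [Fin.snoc_last]

lemma Finite.exists_pos_le_of_pos {ι : Type*} [Finite ι] (f : ι → ℝ) :
    ∃ δ > 0, ∀ i, 0 < f i → δ ≤ f i := by
  obtain ⟨M, hM⟩ := Finite.exists_le fun i => (f i)⁻¹
  exact ⟨(max M 1)⁻¹, by positivity,
    fun i hi => inv_le_of_inv_le₀ hi ((hM i).trans (le_max_left _ _))⟩

section reachRank

variable {ι : Type*} [Fintype ι] (r : ι → ι → Prop)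

noncomputable def reachRank (t : ι) : ℕ := by
  classical exact #{j | ReflTransGen r j t}

variable {r}

lemma reachRank_le_of_reflTransGen {t s : ι} (h : ReflTransGen r t s) :
    reachRank r t ≤ reachRank r s := by
  classical
  unfold reachRank
  refine card_le_card fun j hj => ?_
  simp only [mem_filter, mem_univ, true_and] at hj ⊢
  exact hj.trans h

lemma reachRank_lt_of_reflTransGen {t s : ι} (h : ReflTransGen r t s)
    (h' : ¬ ReflTransGen r s t) : reachRank r t < reachRank r s := by
  classical
  unfold reachRank
  refine card_lt_card ⟨fun j hj => ?_, fun hsub => h' ?_⟩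
  · simp only [mem_filter, mem_univ, true_and] at hj ⊢; exact hj.trans h
  · simpa using hsub (by simp [ReflTransGen.refl] : s ∈ ({j | ReflTransGen r j s} : Finset ι))

end reachRank

theorem exists_afriat_weights {ι : Type*} [Fintype ι] (A : ι → ι → ℝ)
    (hA : ∀ k j, TransGen (fun a b => 0 ≤ A a b) k j → A j k ≤ 0) :
    ∃ g lam : ι → ℝ, (∀ k, 0 < g k) ∧ (∀ k, 0 < lam k) ∧
      ∀ s t, lam t * A t s ≤ g s - g t := by
  set r : ι → ι → Prop := fun a b => 0 ≤ A a b
  obtain ⟨δ, hδ, hδA⟩ := Finite.exists_pos_le_of_pos fun p : ι × ι => -A p.1 p.2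
  obtain ⟨B, hB⟩ := Finite.exists_le fun p : ι × ι => A p.1 p.2
  set C := 1 + max B 0 / δ
  have hC : 1 ≤ C := le_add_of_nonneg_right (by positivity)
  set g : ι → ℝ := fun t => C ^ reachRank r t
  have hg : ∀ t, 0 < g t := fun t => by positivity
  refine ⟨g, fun t => g t / δ, hg, fun t => div_pos (hg t) hδ, fun s t => ?_⟩
  rcases lt_or_ge (A t s) 0 with hneg | hnonneg
  · calc g t / δ * A t s ≤ g t / δ * -δ :=
          mul_le_mul_of_nonneg_left (by linarith [hδA (t, s) (neg_pos.mpr hneg)])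
            (div_pos (hg t) hδ).le
      _ = -g t := by field_simp
      _ ≤ g s - g t := by linarith [hg s]
  have hts : ReflTransGen r t s := .single hnonneg
  rcases hnonneg.eq_or_lt with hzero | hpos
  · rw [← hzero, mul_zero, sub_nonneg]
    exact pow_le_pow_right₀ hC (reachRank_le_of_reflTransGen hts)
  have hst : ¬ ReflTransGen r s t := fun hst => by
    rcases reflTransGen_iff_eq_or_transGen.mp hst with rfl | hst
    · exact (hA t t (.single hpos.le)).not_gt hpos
    · exact (hA s t hst).not_gt hpos
  have hCg : C * g t ≤ g s := by
    rw [← pow_succ']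
    exact pow_le_pow_right₀ hC (reachRank_lt_of_reflTransGen hts hst)
  calc g t / δ * A t s ≤ g t / δ * max B 0 :=
        mul_le_mul_of_nonneg_left ((hB (t, s)).trans (le_max_left _ _)) (div_pos (hg t) hδ).le
    _ = C * g t - g t := by simp only [C]; field_simp; ring
    _ ≤ g s - g t := by linarith

theorem stmt2_general (m K : ℕ) (u : Fin K → (Fin m → ℝ) → ℝ) (β : Fin K → (Fin m → ℝ))
    -- GARP with constraint functions `g_k(β) = u_k(β_k) − u_k(β)`:
    (hGARP : ∀ k j : Fin K, k ≠ j →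
      (∃ (L : ℕ) (i : Fin (L + 1) → Fin K),
        u k (β k) ≤ u k (β (i 0)) ∧
        (∀ l : Fin L, u (i l.castSucc) (β (i l.castSucc)) ≤ u (i l.castSucc) (β (i l.succ))) ∧
        u (i (Fin.last L)) (β (i (Fin.last L))) ≤ u (i (Fin.last L)) (β j)) →
      u j (β k) ≤ u j (β j)) :
    ∃ gbar lam : Fin K → ℝ, (∀ k, 0 < gbar k) ∧ (∀ k, 0 < lam k) ∧
      ∀ s t, gbar s - gbar t - lam t * (u t (β s) - u t (β t)) ≥ 0 := by
  set A : Fin K → Fin K → ℝ := fun t s => u t (β s) - u t (β t)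
  have hA : ∀ k j, TransGen (fun a b => 0 ≤ A a b) k j → A j k ≤ 0 := by
    intro k j hkj
    rcases eq_or_ne k j with rfl | hne
    · exact (sub_self _).le
    obtain ⟨L, i, h_first, h_step, h_last⟩ :=
      exists_chain_of_transGen (fun t => (sub_self (u t (β t))).ge) hkj
    exact sub_nonpos.mpr <| hGARP k j hne
      ⟨L, i, sub_nonneg.mp h_first, fun l => sub_nonneg.mp (h_step l), sub_nonneg.mp h_last⟩
  obtain ⟨gbar, lam, hgbar, hlam, hineq⟩ := exists_afriat_weights A hA
  exact ⟨gbar, lam, hgbar, hlam, fun s t => by linarith [hineq s t]⟩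

theorem stmt2 (m K : ℕ) (u : Fin K → (Fin m → ℝ) → ℝ) (β : Fin K → (Fin m → ℝ))
    (hβ : ∀ k, β k ∈ Rplus m)
    (hmono : ∀ k, MonoOnRplus m (u k))
    (hcont : ∀ k, ContinuousOn (u k) (Rplus m))
    (hlns : ∀ k, LNS m (u k))
    -- GARP with constraint functions `g_k(β) = u_k(β_k) − u_k(β)`:
    (hGARP : ∀ k j : Fin K, k ≠ j →
      (∃ (L : ℕ) (i : Fin (L + 1) → Fin K),
        u k (β k) ≤ u k (β (i 0)) ∧
        (∀ l : Fin L, u (i l.castSucc) (β (i l.castSucc)) ≤ u (i l.castSucc) (β (i l.succ))) ∧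
        u (i (Fin.last L)) (β (i (Fin.last L))) ≤ u (i (Fin.last L)) (β j)) →
      u j (β k) ≤ u j (β j)) :
    ∃ gbar lam : Fin K → ℝ, (∀ k, 0 < gbar k) ∧ (∀ k, 0 < lam k) ∧
      ∀ s t, gbar s - gbar t - lam t * (u t (β s) - u t (β t)) ≥ 0 :=
  stmt2_general m K u β hGARP
end

section
/- Let u_k : ℝ_+^m → ℝ (k = 1,…,K) be functions and β_k ∈ ℝ_+^m bundles, and suppose positive scalars ḡ_k, λ_k (k = 1,…,K) satisfy ḡ_s − ḡ_t − λ_t (u_t(β_s) − u_t(β_t)) ≥ 0 for all s, t. Define g(β) = max_{k ∈ {1,…,K}} { ḡ_k + λ_k (u_k(β) − u_k(β_k)) }. Then g(β_k) = ḡ_k for every k, and for every k and every β ∈ ℝ_+^m with g(β) ≤ ḡ_k one has u_k(β) ≤ u_k(β_k); that is, β_k maximizes u_k over the budget set {β : g(β) ≤ ḡ_k}. -/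
section AfriatMax

variable {ι X 𝕜 : Type*} [Field 𝕜] [LinearOrder 𝕜] [IsStrictOrderedRing 𝕜]
  (s : Finset ι) (hs : s.Nonempty) (u : ι → X → 𝕜) (β : ι → X) (gbar lam : ι → 𝕜)

def afriatMax (b : X) : 𝕜 :=
  s.sup' hs fun t => gbar t + lam t * (u t b - u t (β t))

theorem afriatMax_apply_self
    (hineq : ∀ r ∈ s, ∀ t ∈ s, gbar r - gbar t - lam t * (u t (β r) - u t (β t)) ≥ 0)
    {k : ι} (hk : k ∈ s) : afriatMax s hs u β gbar lam (β k) = gbar k := by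
  refine le_antisymm (Finset.sup'_le _ _ fun t ht => ?_) ?_
  · linarith [hineq k hk t ht]
  · exact (Finset.le_sup' (fun t => gbar t + lam t * (u t (β k) - u t (β t))) hk).trans_eq'
      (by simp)

theorem le_of_afriatMax_le {k : ι} (hk : k ∈ s) (hlam : 0 < lam k) {b : X}
    (hb : afriatMax s hs u β gbar lam b ≤ gbar k) : u k b ≤ u k (β k) := by
  have hterm : gbar k + lam k * (u k b - u k (β k)) ≤ gbar k :=
    (Finset.le_sup' (fun t => gbar t + lam t * (u t b - u t (β t))) hk).trans hb
  have hmul : lam k * (u k b - u k (β k)) ≤ 0 := by linarith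
  linarith [nonpos_of_mul_nonpos_right hmul hlam]

end AfriatMax

theorem stmt3_general (m K : ℕ) (hK : 0 < K)
    (u : Fin K → (Fin m → ℝ) → ℝ) (β : Fin K → (Fin m → ℝ))
    (gbar lam : Fin K → ℝ) (hlpos : ∀ k, 0 < lam k)
    (hineq : ∀ s t, gbar s - gbar t - lam t * (u t (β s) - u t (β t)) ≥ 0)
    (g : (Fin m → ℝ) → ℝ)
    (hgdef : ∀ b, g b = Finset.univ.sup' (Finset.univ_nonempty_iff.mpr ⟨⟨0, hK⟩⟩)
        (fun k => gbar k + lam k * (u k b - u k (β k)))) :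
    (∀ k, g (β k) = gbar k) ∧
    (∀ k, ∀ b ∈ Rplus m, g b ≤ gbar k → u k b ≤ u k (β k)) := by
  have hg : g = afriatMax _ _ u β gbar lam := funext hgdef
  subst hg
  exact ⟨fun k => afriatMax_apply_self _ _ u β gbar lam (fun r _ t _ => hineq r t)
      (Finset.mem_univ k),
    fun k _ _ => le_of_afriatMax_le _ _ u β gbar lam (Finset.mem_univ k) (hlpos k)⟩

theorem stmt3 (m K : ℕ) (hK : 0 < K)
    (u : Fin K → (Fin m → ℝ) → ℝ) (β : Fin K → (Fin m → ℝ))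
    (hβ : ∀ k, β k ∈ Rplus m)
    (gbar lam : Fin K → ℝ) (hgpos : ∀ k, 0 < gbar k) (hlpos : ∀ k, 0 < lam k)
    (hineq : ∀ s t, gbar s - gbar t - lam t * (u t (β s) - u t (β t)) ≥ 0)
    (g : (Fin m → ℝ) → ℝ)
    (hgdef : ∀ b, g b = Finset.univ.sup' (Finset.univ_nonempty_iff.mpr ⟨⟨0, hK⟩⟩)
        (fun k => gbar k + lam k * (u k b - u k (β k)))) :
    (∀ k, g (β k) = gbar k) ∧
    (∀ k, ∀ b ∈ Rplus m, g b ≤ gbar k → u k b ≤ u k (β k)) :=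
  stmt3_general m K hK u β gbar lam hlpos hineq g hgdef
end

section
/- Consider finite sets X, A, Y, a prior pmf μ on X, utilities U_k : X × A → ℝ and attention strategies α_k (k = 1,…,K). Suppose positive scalars c_k, λ_k satisfy the BRP inequalities c_j − c_k − λ_k (J(α_j, U_k) − J(α_k, U_k)) ≥ 0 for all j, k. Define C(α) = max_{k ∈ {1,…,K}} { c_k + λ_k (J(α, U_k) − J(α_k, U_k)) }. Then C(α_k) = c_k for every k, and for every k, α_k maximizes λ_k J(α, U_k) − C(α) over all attention strategies α. -/
open Finset

/-- A probability mass function on a finite set. -/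
def IsPmf {X : Type*} [Fintype X] (μ : X → ℝ) : Prop :=
  (∀ x, 0 ≤ μ x) ∧ ∑ x, μ x = 1

/-- An attention strategy: for each state `x`, a pmf `α x : Y → ℝ` on observations. -/
def IsAttn {X Y : Type*} [Fintype Y] (α : X → Y → ℝ) : Prop :=
  (∀ x y, 0 ≤ α x y) ∧ ∀ x, ∑ y, α x y = 1

/-- Expected utility `J(α, U) = Σ_y max_a Σ_x μ(x) α(y|x) U(x,a)` of attention strategy `α`. -/
noncomputable def Jval {X A Y : Type*} [Fintype X] [Fintype A] [Fintype Y] [Nonempty A]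
    (μ : X → ℝ) (α : X → Y → ℝ) (U : X → A → ℝ) : ℝ :=
  ∑ y, Finset.univ.sup' Finset.univ_nonempty (fun a => ∑ x, μ x * α x y * U x a)

/-- A row-stochastic `|Y| × |Y|` matrix. -/
def RowStoch {Y : Type*} [Fintype Y] (Q : Y → Y → ℝ) : Prop :=
  (∀ y y', 0 ≤ Q y y') ∧ ∀ y, ∑ y', Q y y' = 1

/-- Blackwell order: `α ≥_B α̂` iff `α̂ = α Q` for some row-stochastic matrix `Q`. -/
def BlackwellGE {X Y : Type*} [Fintype Y] (α αhat : X → Y → ℝ) : Prop :=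
  ∃ Q : Y → Y → ℝ, RowStoch Q ∧ ∀ x y, αhat x y = ∑ y', α x y' * Q y' y

/-! At `α k` the `k`-th term of the maximum defining `C` is `c k`, and the BRP inequality for the
pair `(j, k)` says precisely that the `j`-th term is at most `c k`; hence `C (α k) = c k`.
Since `C a` dominates its `k`-th term, `lam k * J(a, U k) - C a` never exceeds
`lam k * J(α k, U k) - c k`. -/

theorem Finset.sup'_eq_of_mem_of_forall_le {ι α : Type*} [SemilatticeSup α] {s : Finset ι}
    (H : s.Nonempty) {f : ι → α} {k : ι} (hk : k ∈ s) (h : ∀ j ∈ s, f j ≤ f k) :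
    s.sup' H f = f k :=
  le_antisymm (sup'_le H f h) (le_sup' f hk)

section BRPCost

variable {ι β : Type*} [Fintype ι] [Nonempty ι]

noncomputable def brpCost (c lam : ι → ℝ) (v : ι → β → ℝ) (b : ι → β) (a : β) : ℝ :=
  univ.sup' univ_nonempty fun k => c k + lam k * (v k a - v k (b k))

variable {c lam : ι → ℝ} {v : ι → β → ℝ} {b : ι → β}

theorem le_brpCost (k : ι) (a : β) :
    c k + lam k * (v k a - v k (b k)) ≤ brpCost c lam v b a :=
  le_sup' (fun k => c k + lam k * (v k a - v k (b k))) (mem_univ k)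

theorem brpCost_apply_eq (hBRP : ∀ j k, lam k * (v k (b j) - v k (b k)) ≤ c j - c k) (k : ι) :
    brpCost c lam v b (b k) = c k := by
  have hk : c k + lam k * (v k (b k) - v k (b k)) = c k := by ring
  rw [brpCost, sup'_eq_of_mem_of_forall_le univ_nonempty (mem_univ k), hk]
  intro j _
  linarith [hBRP k j]

theorem mul_sub_brpCost_le (hBRP : ∀ j k, lam k * (v k (b j) - v k (b k)) ≤ c j - c k)
    (k : ι) (a : β) :
    lam k * v k a - brpCost c lam v b a ≤ lam k * v k (b k) - brpCost c lam v b (b k) := by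
  rw [brpCost_apply_eq hBRP]
  linarith [le_brpCost (c := c) (lam := lam) (v := v) (b := b) k a]

end BRPCost

theorem stmt6_general {X A Y : Type*} [Fintype X] [Fintype A] [Fintype Y] [Nonempty A]
    (K : ℕ) (hK : 0 < K) (μ : X → ℝ)
    (U : Fin K → X → A → ℝ) (α : Fin K → X → Y → ℝ)
    (c lam : Fin K → ℝ)
    (hBRP : ∀ j k : Fin K,
      c j - c k - lam k * (Jval μ (α j) (U k) - Jval μ (α k) (U k)) ≥ 0)
    (C : (X → Y → ℝ) → ℝ)
    (hCdef : ∀ a : X → Y → ℝ,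
      C a = Finset.univ.sup' (Finset.univ_nonempty_iff.mpr ⟨⟨0, hK⟩⟩)
        (fun k => c k + lam k * (Jval μ a (U k) - Jval μ (α k) (U k)))) :
    (∀ k, C (α k) = c k) ∧
    (∀ k, ∀ a : X → Y → ℝ, IsAttn a →
      lam k * Jval μ a (U k) - C a ≤ lam k * Jval μ (α k) (U k) - C (α k)) := by
  have : Nonempty (Fin K) := ⟨⟨0, hK⟩⟩
  set v : Fin K → (X → Y → ℝ) → ℝ := fun k a => Jval μ a (U k)
  obtain rfl : C = brpCost c lam v α := funext hCdef
  have hBRP' : ∀ j k, lam k * (v k (α j) - v k (α k)) ≤ c j - c k :=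
    fun j k => sub_nonneg.mp (hBRP j k)
  exact ⟨brpCost_apply_eq hBRP', fun k a _ => mul_sub_brpCost_le hBRP' k a⟩

theorem stmt6 {X A Y : Type*} [Fintype X] [Fintype A] [Fintype Y] [Nonempty A]
    (K : ℕ) (hK : 0 < K) (μ : X → ℝ) (hμ : IsPmf μ)
    (U : Fin K → X → A → ℝ) (α : Fin K → X → Y → ℝ) (hα : ∀ k, IsAttn (α k))
    (c lam : Fin K → ℝ) (hc : ∀ k, 0 < c k) (hlam : ∀ k, 0 < lam k)
    (hBRP : ∀ j k : Fin K,
      c j - c k - lam k * (Jval μ (α j) (U k) - Jval μ (α k) (U k)) ≥ 0)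
    (C : (X → Y → ℝ) → ℝ)
    (hCdef : ∀ a : X → Y → ℝ,
      C a = Finset.univ.sup' (Finset.univ_nonempty_iff.mpr ⟨⟨0, hK⟩⟩)
        (fun k => c k + lam k * (Jval μ a (U k) - Jval μ (α k) (U k)))) :
    (∀ k, C (α k) = c k) ∧
    (∀ k, ∀ a : X → Y → ℝ, IsAttn a →
      lam k * Jval μ a (U k) - C a ≤ lam k * Jval μ (α k) (U k) - C (α k)) :=
  stmt6_general K hK μ U α c lam hBRP C hCdef
end

section
/- Consider finite sets X, A, Y, a prior pmf μ on X, utilities U_k : X × A → ℝ and attention strategies α_k (k = 1,…,K). Suppose the NIAC cyclical monotonicity condition holds: for every sequence of indices k_1, …, k_m ∈ {1,…,K} (with k_{m+1} := k_1), Σ_{i=1}^{m} ( J(α_{k_i}, U_{k_i}) − J(α_{k_{i+1}}, U_{k_i}) ) ≥ 0. Then there exist real scalars c_1,…,c_K such that J(α_k, U_k) − c_k ≥ J(α_j, U_k) − c_j for all j, k ∈ {1,…,K}; i.e., the BRP inequalities are feasible with all multipliers λ_k = 1. -/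
open Finset

section

variable {ι : Type*}

def CyclicallyMonotone (v : ι → ι → ℝ) : Prop :=
  ∀ m : ℕ, 0 < m → ∀ ks : ℕ → ι, 0 ≤ ∑ i ∈ range m, v (ks i) (ks ((i + 1) % m))

def walkCost (v : ι → ι → ℝ) (q : ℕ → ι) (L : ℕ) : ℝ :=
  ∑ i ∈ range L, v (q i) (q (i + 1))

lemma walkCost_cons (v : ι → ι → ℝ) (a : ι) (q : ℕ → ι) (L : ℕ) :
    walkCost v (Stream'.cons a q) (L + 1) = v a (q 0) + walkCost v q L := by
  unfold walkCost
  rw [sum_range_succ', add_comm]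
  rfl

lemma CyclicallyMonotone.walkCost_nonneg {v : ι → ι → ℝ} (hv : CyclicallyMonotone v)
    {q : ℕ → ι} {L : ℕ} (hL : 0 < L) (hq : q L = q 0) : 0 ≤ walkCost v q L := by
  refine (hv L hL q).trans_eq (sum_congr rfl fun i hi => ?_)
  rcases Nat.lt_or_ge (i + 1) L with hi' | hi'
  · rw [Nat.mod_eq_of_lt hi']
  · rw [show i + 1 = L by have := mem_range.1 hi; omega, Nat.mod_self, hq]

def walkCostsBetween (v : ι → ι → ℝ) (a b : ι) : Set ℝ :=
  {r | ∃ (q : ℕ → ι) (L : ℕ), q 0 = a ∧ q L = b ∧ walkCost v q L = r}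

noncomputable def shortestWalkCost (v : ι → ι → ℝ) (a b : ι) : ℝ :=
  sInf (walkCostsBetween v a b)

lemma walkCostsBetween_nonempty (v : ι → ι → ℝ) (a b : ι) :
    (walkCostsBetween v a b).Nonempty :=
  ⟨_, Stream'.cons a (Stream'.const b), 1, rfl, rfl, rfl⟩

lemma CyclicallyMonotone.bddBelow_walkCostsBetween {v : ι → ι → ℝ} (hv : CyclicallyMonotone v)
    (a b : ι) : BddBelow (walkCostsBetween v a b) := by
  refine ⟨-v b a, ?_⟩
  rintro _ ⟨q, L, rfl, hqL, rfl⟩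
  have := hv.walkCost_nonneg (q := Stream'.cons b q) L.succ_pos hqL
  rw [walkCost_cons] at this
  linarith

lemma CyclicallyMonotone.shortestWalkCost_le_add {v : ι → ι → ℝ} (hv : CyclicallyMonotone v)
    (a b c : ι) : shortestWalkCost v a c ≤ v a b + shortestWalkCost v b c := by
  rw [← sub_le_iff_le_add']
  refine le_csInf (walkCostsBetween_nonempty v b c) ?_
  rintro _ ⟨q, L, rfl, hqL, rfl⟩
  rw [sub_le_iff_le_add', ← walkCost_cons]
  exact csInf_le (hv.bddBelow_walkCostsBetween a c) ⟨_, L + 1, rfl, hqL, rfl⟩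

lemma CyclicallyMonotone.exists_potential {v : ι → ι → ℝ} (hv : CyclicallyMonotone v) :
    ∃ c : ι → ℝ, ∀ j k, c k ≤ v k j + c j := by
  cases isEmpty_or_nonempty ι with
  | inl _ => exact ⟨isEmptyElim, isEmptyElim⟩
  | inr h =>
    obtain ⟨b⟩ := h
    exact ⟨fun k => shortestWalkCost v k b, fun j k => hv.shortestWalkCost_le_add k j b⟩

end

theorem stmt8_general {X A Y : Type*} [Fintype X] [Fintype A] [Fintype Y] [Nonempty A]
    (K : ℕ) (μ : X → ℝ)
    (U : Fin K → X → A → ℝ) (α : Fin K → X → Y → ℝ)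
    -- NIAC cyclical monotonicity
    (hNIAC : ∀ m : ℕ, 0 < m → ∀ ks : ℕ → Fin K,
      0 ≤ ∑ i ∈ Finset.range m,
        (Jval μ (α (ks i)) (U (ks i)) - Jval μ (α (ks ((i + 1) % m))) (U (ks i)))) :
    ∃ c : Fin K → ℝ, ∀ j k : Fin K,
      Jval μ (α j) (U k) - c j ≤ Jval μ (α k) (U k) - c k := by
  obtain ⟨c, hc⟩ := CyclicallyMonotone.exists_potential
    (v := fun k j => Jval μ (α k) (U k) - Jval μ (α j) (U k)) hNIAC
  exact ⟨c, fun j k => by linarith [hc j k]⟩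

theorem stmt8 {X A Y : Type*} [Fintype X] [Fintype A] [Fintype Y] [Nonempty A]
    (K : ℕ) (μ : X → ℝ) (hμ : IsPmf μ)
    (U : Fin K → X → A → ℝ) (α : Fin K → X → Y → ℝ) (hα : ∀ k, IsAttn (α k))
    -- NIAC cyclical monotonicity
    (hNIAC : ∀ m : ℕ, 0 < m → ∀ ks : ℕ → Fin K,
      0 ≤ ∑ i ∈ Finset.range m,
        (Jval μ (α (ks i)) (U (ks i)) - Jval μ (α (ks ((i + 1) % m))) (U (ks i)))) :
    ∃ c : Fin K → ℝ, ∀ j k : Fin K,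
      Jval μ (α j) (U k) - c j ≤ Jval μ (α k) (U k) - c k :=
  stmt8_general K μ U α hNIAC
end

section
/- Consider finite sets X, A, Y, a prior pmf μ on X with μ(x) > 0 for all x, utilities U_k : X × A → ℝ and attention strategies α_k (k = 1,…,K). Then the BRP inequalities are feasible (there exist positive scalars c_k, λ_k with c_j − c_k − λ_k (J(α_j, U_k) − J(α_k, U_k)) ≥ 0 for all j, k) if and only if the dataset of attention strategies with constraint functions G_k(α) = J(α_k, U_k) − J(α, U_k) satisfies GARP: whenever there exist indices i_1,…,i_L with J(α_{i_1}, U_k) ≥ J(α_k, U_k), J(α_{i_2}, U_{i_1}) ≥ J(α_{i_1}, U_{i_1}), …, J(α_j, U_{i_L}) ≥ J(α_{i_L}, U_{i_L}), it follows that J(α_k, U_j) ≤ J(α_j, U_j). -/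
open Finset

/-!
Writing `e k j = J(α_j, U_k) - J(α_k, U_k)`, both conditions only concern the real matrix `e`,
and the equivalence is Afriat's theorem for it. If the inequalities hold, `c` is monotone along the
revealed-preference relation `0 ≤ e k j`, which forces `e j k ≤ 0` whenever `k` is revealed
preferred to `j`. Conversely, GARP makes every step `0 < e k j` strictly raise the rank
`r a = #{m | m is revealed preferred to a}`, and `c k = M ^ r k`, `λ k = M ^ r k / δ` work once
`δ` is below every `|e k j|` with `e k j < 0` and `M` is large compared with `e / δ`.
-/

open Relation

section Chains

variable {ι : Type*} {R : ι → ι → Prop}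

theorem Relation.ReflTransGen.of_fin_chain {k j : ι} {L : ℕ} (i : Fin (L + 1) → ι) (h0 : R k (i 0))
    (hstep : ∀ l : Fin L, R (i l.castSucc) (i l.succ)) (hlast : R (i (Fin.last L)) j) :
    ReflTransGen R k j := by
  have hpath : ∀ l : Fin (L + 1), ReflTransGen R (i 0) (i l) := by
    intro l
    induction l using Fin.induction with
    | zero => exact .refl
    | succ m ih => exact ih.tail (hstep m)
  exact (ReflTransGen.single h0).trans ((hpath (Fin.last L)).tail hlast)

theorem Relation.ReflTransGen.exists_fin_chain (hR : ∀ a, R a a) {k j : ι} (h : ReflTransGen R k j) :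
    ∃ (L : ℕ) (i : Fin (L + 1) → ι),
      R k (i 0) ∧ (∀ l : Fin L, R (i l.castSucc) (i l.succ)) ∧ R (i (Fin.last L)) j := by
  induction h with
  | refl => exact ⟨0, fun _ => k, hR k, fun l => l.elim0, hR k⟩
  | @tail b c _ hbc ih =>
    obtain ⟨L, i, h0, hstep, hlast⟩ := ih
    refine ⟨L + 1, Fin.snoc i b, ?_, fun l => ?_, by rwa [Fin.snoc_last]⟩
    · rwa [← Fin.castSucc_zero, Fin.snoc_castSucc]
    · induction l using Fin.lastCases with
      | last => rwa [Fin.snoc_castSucc, Fin.succ_last, Fin.snoc_last]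
      | cast m => rw [Fin.succ_castSucc, Fin.snoc_castSucc, Fin.snoc_castSucc]; exact hstep m

theorem Relation.reflTransGen_iff_exists_fin_chain (hR : ∀ a, R a a) {k j : ι} :
    ReflTransGen R k j ↔ ∃ (L : ℕ) (i : Fin (L + 1) → ι),
      R k (i 0) ∧ (∀ l : Fin L, R (i l.castSucc) (i l.succ)) ∧ R (i (Fin.last L)) j :=
  ⟨ReflTransGen.exists_fin_chain hR, fun ⟨_, i, h0, hstep, hlast⟩ =>
    ReflTransGen.of_fin_chain i h0 hstep hlast⟩

end Chains

theorem exists_rank_of_transitive {ι : Type*} [Fintype ι] {T : ι → ι → Prop}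
    (hrefl : ∀ a, T a a) (htrans : ∀ {a b c}, T a b → T b c → T a c) :
    ∃ r : ι → ℕ, (∀ a b, T a b → r a ≤ r b) ∧ (∀ a b, T a b → ¬ T b a → r a < r b) := by
  classical
  refine ⟨fun a => #{m | T m a}, fun a b hab => card_le_card ?_, fun a b hab hba => ?_⟩
  · intro m hm
    simp only [mem_filter, mem_univ, true_and] at hm ⊢
    exact htrans hm hab
  · refine card_lt_card ⟨fun m hm => ?_, fun hsub => hba ?_⟩
    · simp only [mem_filter, mem_univ, true_and] at hm ⊢
      exact htrans hm hab
    · simpa using hsub (by simpa using hrefl b)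

theorem exists_pos_le_neg_of_neg {ι : Type*} [Finite ι] (f : ι → ℝ) :
    ∃ δ > 0, ∀ p, f p < 0 → f p ≤ -δ := by
  cases isEmpty_or_nonempty ι
  · exact ⟨1, one_pos, fun p => isEmptyElim p⟩
  obtain ⟨p₀, hp₀⟩ := Finite.exists_max fun p => if f p < 0 then f p else -1
  refine ⟨-(if f p₀ < 0 then f p₀ else -1), by split_ifs <;> linarith, fun p hp => ?_⟩
  simpa [hp] using hp₀ p

theorem exists_one_lt_forall_le {ι : Type*} [Finite ι] (f : ι → ℝ) :
    ∃ M, 1 < M ∧ ∀ p, f p ≤ M := by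
  obtain ⟨B, hB⟩ := (Set.finite_range f).bddAbove
  exact ⟨max B 2, by simp, fun p => (hB ⟨p, rfl⟩).trans (le_max_left _ _)⟩

section Afriat

variable {ι : Type*} (e : ι → ι → ℝ)

theorem afriat_of_rank [Finite ι] (r : ι → ℕ) (hle : ∀ k j, 0 ≤ e k j → r k ≤ r j)
    (hlt : ∀ k j, 0 < e k j → r k < r j) :
    ∃ c lam : ι → ℝ, (∀ k, 0 < c k) ∧ (∀ k, 0 < lam k) ∧
      ∀ j k, c j - c k - lam k * e k j ≥ 0 := by
  obtain ⟨δ, hδ, hneg⟩ := exists_pos_le_neg_of_neg fun p : ι × ι => e p.1 p.2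
  obtain ⟨M, hM, hbig⟩ := exists_one_lt_forall_le fun p : ι × ι => 1 + e p.1 p.2 / δ
  have hM0 : 0 < M := one_pos.trans hM
  refine ⟨fun k => M ^ r k, fun k => M ^ r k / δ, fun k => by positivity,
    fun k => by positivity, fun j k => ?_⟩
  have hck : 0 < M ^ r k := by positivity
  have hcj : 0 < M ^ r j := by positivity
  rcases lt_trichotomy (e k j) 0 with hkj | hkj | hkj
  · have : M ^ r k / δ * e k j ≤ -M ^ r k := by
      calc M ^ r k / δ * e k j ≤ M ^ r k / δ * -δ := by gcongr; exact hneg (k, j) hkj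
        _ = -M ^ r k := by field_simp
    linarith
  · have := pow_le_pow_right₀ hM.le (hle k j hkj.ge)
    simp [hkj, this]
  · have hrank : M ^ (r k + 1) ≤ M ^ r j := pow_le_pow_right₀ hM.le (hlt k j hkj)
    have : M ^ r k / δ * e k j ≤ M ^ r k * (M - 1) := by
      rw [div_mul_eq_mul_div, mul_div_assoc]
      gcongr
      linarith [hbig (k, j)]
    rw [pow_succ] at hrank
    linarith

theorem afriat_iff [Fintype ι] :
    (∃ c lam : ι → ℝ, (∀ k, 0 < c k) ∧ (∀ k, 0 < lam k) ∧
      ∀ j k, c j - c k - lam k * e k j ≥ 0) ↔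
    ∀ k j, ReflTransGen (fun a b => 0 ≤ e a b) k j → e j k ≤ 0 := by
  constructor
  · rintro ⟨c, lam, -, hlam, hineq⟩ k j hkj
    have hc : c k ≤ c j := by
      induction hkj with
      | refl => exact le_rfl
      | @tail b b' _ hbb' ih =>
        linarith [hineq b' b, mul_nonneg (hlam b).le hbb']
    exact nonpos_of_mul_nonpos_right (by linarith [hineq k j]) (hlam j)
  · intro garp
    obtain ⟨r, hle, hlt⟩ := exists_rank_of_transitive (T := ReflTransGen fun a b => 0 ≤ e a b)
      (fun _ => .refl) ReflTransGen.trans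
    refine afriat_of_rank e r (fun k j hkj => hle k j (.single hkj)) fun k j hkj =>
      hlt k j (.single hkj.le) fun hjk => ?_
    linarith [garp j k hjk]

end Afriat

theorem stmt9_general {X A Y : Type*} [Fintype X] [Fintype A] [Fintype Y] [Nonempty A]
    (K : ℕ) (μ : X → ℝ)
    (U : Fin K → X → A → ℝ) (α : Fin K → X → Y → ℝ) :
    -- BRP feasibility
    (∃ c lam : Fin K → ℝ, (∀ k, 0 < c k) ∧ (∀ k, 0 < lam k) ∧
      ∀ j k : Fin K,
        c j - c k - lam k * (Jval μ (α j) (U k) - Jval μ (α k) (U k)) ≥ 0)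
    ↔
    -- GARP with constraint functions `G_k(α) = J(α_k, U_k) − J(α, U_k)`
    (∀ k j : Fin K, k ≠ j →
      (∃ (L : ℕ) (i : Fin (L + 1) → Fin K),
        Jval μ (α k) (U k) ≤ Jval μ (α (i 0)) (U k) ∧
        (∀ l : Fin L,
          Jval μ (α (i l.castSucc)) (U (i l.castSucc)) ≤
            Jval μ (α (i l.succ)) (U (i l.castSucc))) ∧
        Jval μ (α (i (Fin.last L))) (U (i (Fin.last L))) ≤
          Jval μ (α j) (U (i (Fin.last L)))) →
      Jval μ (α k) (U j) ≤ Jval μ (α j) (U j)) := by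
  let e : Fin K → Fin K → ℝ := fun k j => Jval μ (α j) (U k) - Jval μ (α k) (U k)
  have hrefl : ∀ a, 0 ≤ e a a := fun a => (sub_self _).ge
  rw [afriat_iff e]
  refine forall₂_congr fun k j => ?_
  rw [reflTransGen_iff_exists_fin_chain hrefl]
  simp only [e, sub_nonneg, sub_nonpos]
  by_cases hkj : k = j
  · subst hkj
    simp
  · simp [hkj]

theorem stmt9 {X A Y : Type*} [Fintype X] [Fintype A] [Fintype Y] [Nonempty A]
    (K : ℕ) (μ : X → ℝ) (hμ : IsPmf μ) (hμpos : ∀ x, 0 < μ x)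
    (U : Fin K → X → A → ℝ) (α : Fin K → X → Y → ℝ) (hα : ∀ k, IsAttn (α k)) :
    -- BRP feasibility
    (∃ c lam : Fin K → ℝ, (∀ k, 0 < c k) ∧ (∀ k, 0 < lam k) ∧
      ∀ j k : Fin K,
        c j - c k - lam k * (Jval μ (α j) (U k) - Jval μ (α k) (U k)) ≥ 0)
    ↔
    -- GARP with constraint functions `G_k(α) = J(α_k, U_k) − J(α, U_k)`
    (∀ k j : Fin K, k ≠ j →
      (∃ (L : ℕ) (i : Fin (L + 1) → Fin K),
        Jval μ (α k) (U k) ≤ Jval μ (α (i 0)) (U k) ∧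
        (∀ l : Fin L,
          Jval μ (α (i l.castSucc)) (U (i l.castSucc)) ≤
            Jval μ (α (i l.succ)) (U (i l.castSucc))) ∧
        Jval μ (α (i (Fin.last L))) (U (i (Fin.last L))) ≤
          Jval μ (α j) (U (i (Fin.last L)))) →
      Jval μ (α k) (U j) ≤ Jval μ (α j) (U j)) :=
  stmt9_general K μ U α
end

section
/- Let X, A, Y be finite sets, μ a pmf on X, and U : X × A → ℝ a utility function. If the attention strategy α Blackwell dominates the attention strategy α̂ (i.e., there exists a row-stochastic |Y| × |Y| matrix Q with α̂ = α Q), then J(α, U) ≥ J(α̂, U), where J(α, U) = Σ_{y ∈ Y} max_{a ∈ A} Σ_{x ∈ X} μ(x) α(y|x) U(x, a). -/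
open Finset

/-! Under the garbling `α̂ = α Q`, the unnormalised payoff vector `a ↦ Σ_x μ(x) α̂(y|x) U(x,a)`
of an observation `y` is the nonnegative combination, with weights `Q(y', y)`, of the payoff vectors
of the observations `y'` under `α`. The maximum of a nonnegative combination is at most the
combination of the maxima, and summing over `y` the rows of `Q` add up to `1`. -/

theorem Finset.sup'_sum_mul_le_sum_mul_sup' {ι A R : Type*} [Semiring R] [LinearOrder R]
    [IsOrderedRing R] (s : Finset ι) (t : Finset A) (ht : t.Nonempty) (w : ι → R)
    (hw : ∀ i ∈ s, 0 ≤ w i) (f : ι → A → R) :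
    t.sup' ht (fun a => ∑ i ∈ s, w i * f i a) ≤ ∑ i ∈ s, w i * t.sup' ht (f i) :=
  sup'_le ht _ fun _ ha =>
    sum_le_sum fun i hi => mul_le_mul_of_nonneg_left (le_sup' (f i) ha) (hw i hi)

theorem sum_sup'_garble_le {Y A : Type*} [Fintype Y] (t : Finset A) (ht : t.Nonempty)
    {Q : Y → Y → ℝ} (hQ : RowStoch Q) (g : Y → A → ℝ) :
    ∑ y, t.sup' ht (fun a => ∑ y', Q y' y * g y' a) ≤ ∑ y', t.sup' ht (g y') :=
  calc ∑ y, t.sup' ht (fun a => ∑ y', Q y' y * g y' a)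
      ≤ ∑ y, ∑ y', Q y' y * t.sup' ht (g y') :=
        sum_le_sum fun y _ =>
          univ.sup'_sum_mul_le_sum_mul_sup' t ht _ (fun y' _ => hQ.1 y' y) g
    _ = ∑ y', t.sup' ht (g y') := by
        rw [sum_comm]
        simp_rw [← sum_mul, hQ.2, one_mul]

theorem sum_mul_garble_mul {X Y A R : Type*} [Fintype X] [Fintype Y] [CommSemiring R]
    (μ : X → R) (α : X → Y → R) (Q : Y → Y → R) (U : X → A → R) (y : Y) (a : A) :
    ∑ x, μ x * (∑ y', α x y' * Q y' y) * U x a = ∑ y', Q y' y * ∑ x, μ x * α x y' * U x a := by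
  simp_rw [mul_sum, sum_mul]
  rw [sum_comm]
  exact sum_congr rfl fun y' _ => sum_congr rfl fun x _ => by ring

theorem Jval_garble_le {X A Y : Type*} [Fintype X] [Fintype A] [Fintype Y] [Nonempty A]
    (μ : X → ℝ) (α : X → Y → ℝ) (U : X → A → ℝ) {Q : Y → Y → ℝ} (hQ : RowStoch Q) :
    Jval μ (fun x y => ∑ y', α x y' * Q y' y) U ≤ Jval μ α U := by
  unfold Jval
  simp_rw [sum_mul_garble_mul]
  exact sum_sup'_garble_le _ _ hQ _

theorem stmt11_general {X A Y : Type*} [Fintype X] [Fintype A] [Fintype Y] [Nonempty A]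
    (μ : X → ℝ) (U : X → A → ℝ)
    (α αhat : X → Y → ℝ)
    (hB : BlackwellGE α αhat) :
    Jval μ αhat U ≤ Jval μ α U := by
  obtain ⟨Q, hQ, hαhat⟩ := hB
  rw [show αhat = _ from funext₂ hαhat]
  exact Jval_garble_le μ α U hQ

theorem stmt11 {X A Y : Type*} [Fintype X] [Fintype A] [Fintype Y] [Nonempty A]
    (μ : X → ℝ) (hμ : IsPmf μ) (U : X → A → ℝ)
    (α αhat : X → Y → ℝ) (hα : IsAttn α) (hαhat : IsAttn αhat)
    (hB : BlackwellGE α αhat) :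
    Jval μ αhat U ≤ Jval μ α U :=
  stmt11_general μ U α αhat hB
end

section
/- Consider finite sets X, A, Y, a prior pmf μ on X, utilities U_k : X × A → ℝ and attention strategies α_k (k = 1,…,K), and suppose positive scalars c_k, λ_k satisfy the BRP inequalities c_j − c_k − λ_k (J(α_j, U_k) − J(α_k, U_k)) ≥ 0 for all j, k. Let α_0 be the non-informative strategy α_0(y|x) = 1/|Y| for all x, y, and define the normalized cost C(α) = max_k { c_k + λ_k (J(α, U_k) − J(α_k, U_k)) } − C*, where C* = max_k { c_k + λ_k (J(α_0, U_k) − J(α_k, U_k)) }. Then: (i) C(α_0) = 0 (normalization); (ii) C(α_k) = c_k − C* for every k; and (iii) C rationalizes the dataset: for every k and every attention strategy α with C(α) ≤ C(α_k), one has J(α, U_k) ≤ J(α_k, U_k). -/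
open Finset

/-! The cost of `α j` is read off the upper envelope of the affine functions
`a ↦ c k + λ k (J(a, U k) - J(α k, U k))`: the `j`-th one equals `c j` at `α j`, and the BRP
inequalities say exactly that every other one is at most `c j` there. Hence a strategy that costs
no more than `α k` lies below `c k` on the `k`-th affine function, which for `λ k > 0` means it
does not raise the utility `J(·, U k)` above `J(α k, U k)`. -/

section BRP

variable {ι β : Type*} [Fintype ι]

def brpEnvelope (hne : (univ : Finset ι).Nonempty) (c lam : ι → ℝ) (V : ι → β → ℝ) (α : ι → β)
    (a : β) : ℝ :=
  univ.sup' hne fun k => c k + lam k * (V k a - V k (α k))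

variable (hne : (univ : Finset ι).Nonempty) {c lam : ι → ℝ} {V : ι → β → ℝ} {α : ι → β}

theorem brpEnvelope_apply_eq
    (hBRP : ∀ j k, c j - c k - lam k * (V k (α j) - V k (α k)) ≥ 0) (j : ι) :
    brpEnvelope hne c lam V α (α j) = c j :=
  le_antisymm (sup'_le _ _ fun k _ => by linarith [hBRP j k])
    (le_sup'_of_le _ (mem_univ j) (by rw [sub_self, mul_zero, add_zero]))

theorem le_of_brpEnvelope_le {k : ι} (hk : 0 < lam k) {a : β}
    (h : brpEnvelope hne c lam V α a ≤ c k) : V k a ≤ V k (α k) := by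
  have hterm : c k + lam k * (V k a - V k (α k)) ≤ c k :=
    (le_sup' (fun k => c k + lam k * (V k a - V k (α k))) (mem_univ k)).trans h
  exact sub_nonpos.mp (nonpos_of_mul_nonpos_right (by linarith) hk)

end BRP

theorem stmt14_general {X A Y : Type*} [Fintype X] [Fintype A] [Fintype Y] [Nonempty A]
    (K : ℕ) (hK : 0 < K) (μ : X → ℝ)
    (U : Fin K → X → A → ℝ) (α : Fin K → X → Y → ℝ)
    (c lam : Fin K → ℝ) (hlam : ∀ k, 0 < lam k)
    (hBRP : ∀ j k : Fin K,
      c j - c k - lam k * (Jval μ (α j) (U k) - Jval μ (α k) (U k)) ≥ 0)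
    (α₀ : X → Y → ℝ)
    (Cstar : ℝ)
    (hCstar : Cstar = Finset.univ.sup' (Finset.univ_nonempty_iff.mpr ⟨⟨0, hK⟩⟩)
        (fun k => c k + lam k * (Jval μ α₀ (U k) - Jval μ (α k) (U k))))
    (C : (X → Y → ℝ) → ℝ)
    (hCdef : ∀ a : X → Y → ℝ,
      C a = Finset.univ.sup' (Finset.univ_nonempty_iff.mpr ⟨⟨0, hK⟩⟩)
        (fun k => c k + lam k * (Jval μ a (U k) - Jval μ (α k) (U k))) - Cstar) :
    -- (i) normalization, (ii) C(α_k) = c_k − C*, (iii) rationalization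
    C α₀ = 0 ∧
    (∀ k, C (α k) = c k - Cstar) ∧
    (∀ k, ∀ a : X → Y → ℝ, IsAttn a → C a ≤ C (α k) →
      Jval μ a (U k) ≤ Jval μ (α k) (U k)) := by
  have hne : (univ : Finset (Fin K)).Nonempty := univ_nonempty_iff.mpr ⟨⟨0, hK⟩⟩
  have hC : ∀ a, C a = brpEnvelope hne c lam (fun k a => Jval μ a (U k)) α a - Cstar := hCdef
  have henv : ∀ j, brpEnvelope hne c lam (fun k a => Jval μ a (U k)) α (α j) = c j :=
    brpEnvelope_apply_eq hne hBRP
  refine ⟨by rw [hCdef, hCstar, sub_self], fun k => by rw [hC, henv], ?_⟩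
  intro k a _ hle
  rw [hC, hC, sub_le_sub_iff_right, henv] at hle
  exact le_of_brpEnvelope_le hne (hlam k) hle

theorem stmt14 {X A Y : Type*} [Fintype X] [Fintype A] [Fintype Y] [Nonempty A] [Nonempty Y]
    (K : ℕ) (hK : 0 < K) (μ : X → ℝ) (hμ : IsPmf μ)
    (U : Fin K → X → A → ℝ) (α : Fin K → X → Y → ℝ) (hα : ∀ k, IsAttn (α k))
    (c lam : Fin K → ℝ) (hc : ∀ k, 0 < c k) (hlam : ∀ k, 0 < lam k)
    (hBRP : ∀ j k : Fin K,
      c j - c k - lam k * (Jval μ (α j) (U k) - Jval μ (α k) (U k)) ≥ 0)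
    -- the non-informative strategy α₀(y|x) = 1/|Y|
    (α₀ : X → Y → ℝ) (hα₀ : ∀ x y, α₀ x y = 1 / (Fintype.card Y : ℝ))
    (Cstar : ℝ)
    (hCstar : Cstar = Finset.univ.sup' (Finset.univ_nonempty_iff.mpr ⟨⟨0, hK⟩⟩)
        (fun k => c k + lam k * (Jval μ α₀ (U k) - Jval μ (α k) (U k))))
    (C : (X → Y → ℝ) → ℝ)
    (hCdef : ∀ a : X → Y → ℝ,
      C a = Finset.univ.sup' (Finset.univ_nonempty_iff.mpr ⟨⟨0, hK⟩⟩)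
        (fun k => c k + lam k * (Jval μ a (U k) - Jval μ (α k) (U k))) - Cstar) :
    -- (i) normalization, (ii) C(α_k) = c_k − C*, (iii) rationalization
    C α₀ = 0 ∧
    (∀ k, C (α k) = c k - Cstar) ∧
    (∀ k, ∀ a : X → Y → ℝ, IsAttn a → C a ≤ C (α k) →
      Jval μ a (U k) ≤ Jval μ (α k) (U k)) :=
  stmt14_general K hK μ U α c lam hlam hBRP α₀ Cstar hCstar C hCdef
end

section
/- Consider finite sets X, A, Y, a prior pmf μ on X, utilities U_k : X × A → ℝ and attention strategies α_k (k = 1,…,K). Then the following are equivalent: (i) there exists a Blackwell-monotone function C from the set of attention strategies to ℝ and positive scalars λ_1,…,λ_K such that for every k, α_k maximizes λ_k J(α, U_k) − C(α) over all attention strategies α; (ii) there exist positive scalars c_k, λ_k with c_j − c_k − λ_k (J(α_j, U_k) − J(α_k, U_k)) ≥ 0 for all j, k; (iii) there exists a Blackwell-monotone, convex function C with C(α_0) = 0 at the non-informative strategy α_0(y|x) = 1/|Y|, and positive scalars λ_1,…,λ_K, such that for every k, α_k maximizes λ_k J(α, U_k) − C(α) over all attention strategies α. -/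
/-!
`J(·, U)` is a sum over signals of maxima of functions linear in the strategy, hence convex, and
garbling a strategy can only lower it. Condition (ii) is an Afriat system: from a solution `(c, λ)`
one builds the cost `C a = max_k (λ_k J(a, U_k) + c_k - λ_k J(α_k, U_k))`, a maximum of
Blackwell-monotone convex functions; the inequalities (ii) say exactly that `C (α_k) = c_k`, which
makes `α_k` optimal for `λ_k J(·, U_k) - C`, and subtracting `C (α_0)` normalizes it. Conversely,
comparing `α_k` with `α_j` under any rationalizing cost gives (ii) with `c_k = C (α_k)` shifted
to be positive.
-/

open Finset

theorem ConvexOn.finset_sup' {ι E : Type*} [AddCommMonoid E] [Module ℝ E] {s : Set E}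
    {t : Finset ι} (ht : t.Nonempty) {f : ι → E → ℝ} (hf : ∀ i ∈ t, ConvexOn ℝ s (f i)) :
    ConvexOn ℝ s fun x => t.sup' ht (f · x) := by
  convert Finset.sup'_induction ht f (p := ConvexOn ℝ s) (fun _ h₁ _ h₂ => h₁.sup h₂) hf
  exact (Finset.sup'_apply ..).symm

section Jval

variable {X A Y : Type*} [Fintype X] [Fintype A] [Fintype Y] [Nonempty A]

theorem Jval_le_of_blackwellGE (μ : X → ℝ) (U : X → A → ℝ) {a ahat : X → Y → ℝ}
    (h : BlackwellGE a ahat) : Jval μ ahat U ≤ Jval μ a U := by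
  obtain ⟨Q, ⟨hQ_nonneg, hQ_sum⟩, rfl⟩ :
      ∃ Q, RowStoch Q ∧ ahat = fun x y => ∑ y', a x y' * Q y' y :=
    let ⟨Q, hQ, h⟩ := h; ⟨Q, hQ, funext₂ h⟩
  set M : Y → ℝ := fun y' => univ.sup' univ_nonempty fun b => ∑ x, μ x * a x y' * U x b
  have garbled_payoff (y : Y) (b : A) :
      ∑ x, μ x * (∑ y', a x y' * Q y' y) * U x b = ∑ y', Q y' y * ∑ x, μ x * a x y' * U x b := by
    simp only [Finset.mul_sum, Finset.sum_mul]
    rw [Finset.sum_comm]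
    exact Finset.sum_congr rfl fun _ _ => Finset.sum_congr rfl fun _ _ => by ring
  calc Jval μ (fun x y => ∑ y', a x y' * Q y' y) U
      ≤ ∑ y, ∑ y', Q y' y * M y' := by
        refine Finset.sum_le_sum fun y _ => Finset.sup'_le _ _ fun b _ => ?_
        rw [garbled_payoff]
        exact Finset.sum_le_sum fun y' _ => mul_le_mul_of_nonneg_left
          (Finset.le_sup' (fun b => ∑ x, μ x * a x y' * U x b) (mem_univ b)) (hQ_nonneg y' y)
    _ = Jval μ a U := by
        rw [Finset.sum_comm]
        simp only [← Finset.sum_mul, hQ_sum, one_mul, M, Jval]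

theorem convexOn_Jval (μ : X → ℝ) (U : X → A → ℝ) :
    ConvexOn ℝ Set.univ fun a : X → Y → ℝ => Jval μ a U := by
  refine ⟨convex_univ, fun η _ ψ _ s t hs ht _ => ?_⟩
  simp only [Jval, smul_eq_mul, Finset.mul_sum, ← Finset.sum_add_distrib]
  refine Finset.sum_le_sum fun y _ => Finset.sup'_le _ _ fun b _ => ?_
  have mix_payoff : ∑ x, μ x * (s • η + t • ψ) x y * U x b
      = s * ∑ x, μ x * η x y * U x b + t * ∑ x, μ x * ψ x y * U x b := by
    simp only [Finset.mul_sum, ← Finset.sum_add_distrib, Pi.add_apply, Pi.smul_apply, smul_eq_mul]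
    exact Finset.sum_congr rfl fun x _ => by ring
  rw [mix_payoff]
  gcongr
  · exact Finset.le_sup' (fun b => ∑ x, μ x * η x y * U x b) (mem_univ b)
  · exact Finset.le_sup' (fun b => ∑ x, μ x * ψ x y * U x b) (mem_univ b)

end Jval

section AfriatCost

variable {ι S : Type*} [Fintype ι] [Nonempty ι] (v : ι → S → ℝ) (p : ι → S) (c : ι → ℝ)

noncomputable def afriatCost (a : S) : ℝ :=
  univ.sup' univ_nonempty fun k => v k a + (c k - v k (p k))

theorem le_afriatCost (k : ι) (a : S) : v k a + (c k - v k (p k)) ≤ afriatCost v p c a :=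
  Finset.le_sup' (fun k => v k a + (c k - v k (p k))) (mem_univ k)

variable {v p c}

theorem afriatCost_apply_self (h : ∀ j k, v k (p j) - v k (p k) ≤ c j - c k) (k : ι) :
    afriatCost v p c (p k) = c k := by
  refine le_antisymm (Finset.sup'_le _ _ fun j _ => ?_) ?_
  · linarith [h k j]
  · simpa using le_afriatCost v p c k (p k)

theorem sub_afriatCost_le (h : ∀ j k, v k (p j) - v k (p k) ≤ c j - c k) (k : ι) (a : S) :
    v k a - afriatCost v p c a ≤ v k (p k) - afriatCost v p c (p k) := by
  rw [afriatCost_apply_self h]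
  linarith [le_afriatCost v p c k a]

theorem afriatCost_le_afriatCost {a b : S} (h : ∀ k, v k b ≤ v k a) :
    afriatCost v p c b ≤ afriatCost v p c a :=
  Finset.sup'_le _ _ fun k _ => (add_le_add_left (h k) _).trans (le_afriatCost v p c k a)

theorem convexOn_afriatCost [AddCommMonoid S] [Module ℝ S] {s : Set S}
    (h : ∀ k, ConvexOn ℝ s (v k)) : ConvexOn ℝ s (afriatCost v p c) :=
  ConvexOn.finset_sup' univ_nonempty fun k _ => (h k).add_const _

end AfriatCost

section RevealedCost

variable {X A Y ι : Type*} [Fintype X] [Fintype A] [Fintype Y] [Nonempty A] [Fintype ι]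

def BlackwellMonotone (C : (X → Y → ℝ) → ℝ) : Prop :=
  ∀ a ahat : X → Y → ℝ, IsAttn a → IsAttn ahat → BlackwellGE a ahat → C ahat ≤ C a

def IsRationalizedBy (μ : X → ℝ) (U : ι → X → A → ℝ) (α : ι → X → Y → ℝ)
    (C : (X → Y → ℝ) → ℝ) (lam : ι → ℝ) : Prop :=
  (∀ k, 0 < lam k) ∧ ∀ k, ∀ a : X → Y → ℝ, IsAttn a →
    lam k * Jval μ a (U k) - C a ≤ lam k * Jval μ (α k) (U k) - C (α k)

def IsAfriatSolution (μ : X → ℝ) (U : ι → X → A → ℝ) (α : ι → X → Y → ℝ) (c lam : ι → ℝ) :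
    Prop :=
  (∀ k, 0 < c k) ∧ (∀ k, 0 < lam k) ∧
    ∀ j k, c j - c k - lam k * (Jval μ (α j) (U k) - Jval μ (α k) (U k)) ≥ 0

variable {μ : X → ℝ} {U : ι → X → A → ℝ} {α : ι → X → Y → ℝ}

theorem IsRationalizedBy.exists_isAfriatSolution {C : (X → Y → ℝ) → ℝ} {lam : ι → ℝ}
    (hα : ∀ k, IsAttn (α k)) (h : IsRationalizedBy μ U α C lam) :
    ∃ c, IsAfriatSolution μ U α c lam := by
  obtain ⟨m, hm⟩ := (Set.finite_range fun k => C (α k)).bddBelow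
  refine ⟨fun k => C (α k) - m + 1, fun k => ?_, h.1, fun j k => ?_⟩
  · linarith [hm (Set.mem_range_self k)]
  · linarith [h.2 k (α j) (hα j)]

theorem IsAfriatSolution.exists_convex_cost {c lam : ι → ℝ} (h : IsAfriatSolution μ U α c lam) :
    ∃ C : (X → Y → ℝ) → ℝ, BlackwellMonotone C ∧
      (∀ η ψ : X → Y → ℝ, IsAttn η → IsAttn ψ → ∀ θ : ℝ, 0 ≤ θ → θ ≤ 1 →
        C (fun x y => θ * η x y + (1 - θ) * ψ x y) ≤ θ * C η + (1 - θ) * C ψ) ∧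
      C (fun _ _ => 1 / (Fintype.card Y : ℝ)) = 0 ∧ IsRationalizedBy μ U α C lam := by
  obtain ⟨-, hlam, hcyc⟩ := h
  cases isEmpty_or_nonempty ι
  · exact ⟨0, fun _ _ _ _ _ => le_rfl, fun _ _ _ _ _ _ _ => by simp, rfl, hlam, isEmptyElim⟩
  set v : ι → (X → Y → ℝ) → ℝ := fun k a => lam k * Jval μ a (U k)
  have hv_cyclic : ∀ j k, v k (α j) - v k (α k) ≤ c j - c k := fun j k => by
    simp only [v]; linarith [hcyc j k]
  have hv_mono : ∀ {a ahat}, BlackwellGE a ahat → ∀ k, v k ahat ≤ v k a := fun hB k =>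
    mul_le_mul_of_nonneg_left (Jval_le_of_blackwellGE μ (U k) hB) (hlam k).le
  have hv_convex : ∀ k, ConvexOn ℝ Set.univ (v k) := fun k =>
    (convexOn_Jval μ (U k)).smul (hlam k).le
  set C := fun a => afriatCost v α c a - afriatCost v α c (fun _ _ => 1 / (Fintype.card Y : ℝ))
  have hC_convex : ConvexOn ℝ Set.univ C := (convexOn_afriatCost hv_convex).add_const _
  refine ⟨C, fun a ahat _ _ hB => ?_, fun η ψ _ _ θ h₀ h₁ => ?_, sub_self _, hlam,
    fun k a _ => ?_⟩
  · exact sub_le_sub_right (afriatCost_le_afriatCost (hv_mono hB)) _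
  · exact hC_convex.2 trivial trivial h₀ (sub_nonneg.2 h₁) (add_sub_cancel θ 1)
  · linarith [sub_afriatCost_le hv_cyclic k a]

end RevealedCost

theorem stmt17_general {X A Y : Type*} [Fintype X] [Fintype A] [Fintype Y] [Nonempty A]
    (K : ℕ) (μ : X → ℝ)
    (U : Fin K → X → A → ℝ) (α : Fin K → X → Y → ℝ) (hα : ∀ k, IsAttn (α k)) :
    -- (i) ↔ (ii)
    ((∃ (C : (X → Y → ℝ) → ℝ) (lam : Fin K → ℝ),
        (∀ a ahat : X → Y → ℝ, IsAttn a → IsAttn ahat → BlackwellGE a ahat →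
          C ahat ≤ C a) ∧
        (∀ k, 0 < lam k) ∧
        (∀ k, ∀ a : X → Y → ℝ, IsAttn a →
          lam k * Jval μ a (U k) - C a ≤ lam k * Jval μ (α k) (U k) - C (α k)))
      ↔
      (∃ c lam : Fin K → ℝ, (∀ k, 0 < c k) ∧ (∀ k, 0 < lam k) ∧
        ∀ j k : Fin K,
          c j - c k - lam k * (Jval μ (α j) (U k) - Jval μ (α k) (U k)) ≥ 0))
    ∧
    -- (ii) ↔ (iii)
    ((∃ c lam : Fin K → ℝ, (∀ k, 0 < c k) ∧ (∀ k, 0 < lam k) ∧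
        ∀ j k : Fin K,
          c j - c k - lam k * (Jval μ (α j) (U k) - Jval μ (α k) (U k)) ≥ 0)
      ↔
      (∃ (C : (X → Y → ℝ) → ℝ) (lam : Fin K → ℝ),
        (∀ a ahat : X → Y → ℝ, IsAttn a → IsAttn ahat → BlackwellGE a ahat →
          C ahat ≤ C a) ∧
        (∀ η ψ : X → Y → ℝ, IsAttn η → IsAttn ψ → ∀ θ : ℝ, 0 ≤ θ → θ ≤ 1 →
          C (fun x y => θ * η x y + (1 - θ) * ψ x y) ≤ θ * C η + (1 - θ) * C ψ) ∧
        C (fun _ _ => 1 / (Fintype.card Y : ℝ)) = 0 ∧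
        (∀ k, 0 < lam k) ∧
        (∀ k, ∀ a : X → Y → ℝ, IsAttn a →
          lam k * Jval μ a (U k) - C a ≤ lam k * Jval μ (α k) (U k) - C (α k)))) := by
  have ii_of_rationalized {C : (X → Y → ℝ) → ℝ} {lam : Fin K → ℝ}
      (h : IsRationalizedBy μ U α C lam) : ∃ c lam, IsAfriatSolution μ U α c lam :=
    let ⟨c, hc⟩ := IsRationalizedBy.exists_isAfriatSolution hα h
    ⟨c, lam, hc⟩
  refine ⟨⟨fun ⟨_, _, _, h⟩ => ii_of_rationalized h, fun ⟨_, lam, h⟩ => ?_⟩,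
    ⟨fun ⟨_, lam, h⟩ => ?_, fun ⟨_, _, _, _, _, h⟩ => ii_of_rationalized h⟩⟩
  · obtain ⟨C, hmono, -, -, hC⟩ := IsAfriatSolution.exists_convex_cost h
    exact ⟨C, lam, hmono, hC⟩
  · obtain ⟨C, hC⟩ := IsAfriatSolution.exists_convex_cost h
    exact ⟨C, lam, hC⟩

theorem stmt17 {X A Y : Type*} [Fintype X] [Fintype A] [Fintype Y] [Nonempty A] [Nonempty Y]
    (K : ℕ) (μ : X → ℝ) (hμ : IsPmf μ)
    (U : Fin K → X → A → ℝ) (α : Fin K → X → Y → ℝ) (hα : ∀ k, IsAttn (α k)) :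
    -- (i) ↔ (ii)
    ((∃ (C : (X → Y → ℝ) → ℝ) (lam : Fin K → ℝ),
        (∀ a ahat : X → Y → ℝ, IsAttn a → IsAttn ahat → BlackwellGE a ahat →
          C ahat ≤ C a) ∧
        (∀ k, 0 < lam k) ∧
        (∀ k, ∀ a : X → Y → ℝ, IsAttn a →
          lam k * Jval μ a (U k) - C a ≤ lam k * Jval μ (α k) (U k) - C (α k)))
      ↔
      (∃ c lam : Fin K → ℝ, (∀ k, 0 < c k) ∧ (∀ k, 0 < lam k) ∧
        ∀ j k : Fin K,
          c j - c k - lam k * (Jval μ (α j) (U k) - Jval μ (α k) (U k)) ≥ 0))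
    ∧
    -- (ii) ↔ (iii)
    ((∃ c lam : Fin K → ℝ, (∀ k, 0 < c k) ∧ (∀ k, 0 < lam k) ∧
        ∀ j k : Fin K,
          c j - c k - lam k * (Jval μ (α j) (U k) - Jval μ (α k) (U k)) ≥ 0)
      ↔
      (∃ (C : (X → Y → ℝ) → ℝ) (lam : Fin K → ℝ),
        (∀ a ahat : X → Y → ℝ, IsAttn a → IsAttn ahat → BlackwellGE a ahat →
          C ahat ≤ C a) ∧
        (∀ η ψ : X → Y → ℝ, IsAttn η → IsAttn ψ → ∀ θ : ℝ, 0 ≤ θ → θ ≤ 1 →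
          C (fun x y => θ * η x y + (1 - θ) * ψ x y) ≤ θ * C η + (1 - θ) * C ψ) ∧
        C (fun _ _ => 1 / (Fintype.card Y : ℝ)) = 0 ∧
        (∀ k, 0 < lam k) ∧
        (∀ k, ∀ a : X → Y → ℝ, IsAttn a →
          lam k * Jval μ a (U k) - C a ≤ lam k * Jval μ (α k) (U k) - C (α k)))) :=
  stmt17_general K μ U α hα
end
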